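/- arXiv:2206.04161 — 6 statements merged into one kernel-verified Lean document; each statement's English description precedes it below -/
import Mathlib

section
/- Let v₁, v₂, v₃ ∈ ℝ² and set τ = ω(v₁,v₂)·ω(v₂,v₃)·ω(v₃,v₁). Then the signature of the Maslov matrix θ(v₁,v₂,v₃) equals the sign of τ: it is 1 if τ > 0, −1 if τ < 0, and 0 if τ = 0. -/
open Matrix

/-- The standard symplectic form on `ℝ²`. -/
def omegaForm (u v : ℝ × ℝ) : ℝ := u.1 * v.2 - u.2 * v.1

/-- The signature of a real `3 × 3` matrix: the number of positive eigenvalues minus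
the number of negative eigenvalues (defined to be `0` if the matrix is not symmetric). -/
noncomputable def matSignature (A : Matrix (Fin 3) (Fin 3) ℝ) : ℤ :=
  if h : A.IsHermitian then
    ((Finset.univ.filter (fun i => 0 < h.eigenvalues i)).card : ℤ)
      - ((Finset.univ.filter (fun i => h.eigenvalues i < 0)).card : ℤ)
  else 0

/-- The Maslov matrix `θ(v₁, v₂, v₃)`. -/
def maslovMatrix (v₁ v₂ v₃ : ℝ × ℝ) : Matrix (Fin 3) (Fin 3) ℝ :=
  !![0, -omegaForm v₁ v₂, omegaForm v₁ v₃;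
     -omegaForm v₁ v₂, 0, -omegaForm v₂ v₃;
     omegaForm v₁ v₃, -omegaForm v₂ v₃, 0]

/-!
The eigenvalues of the symmetric matrix `θ` are three reals with sum `tr θ = 0` and product
`det θ = -2τ`. Three reals summing to zero have signs `(+, +, -)` when their product is
negative, `(+, -, -)` when it is positive, and `(0, a, -a)` when it vanishes, so the
signature of `θ` is `-sign (det θ) = sign τ`.
-/

theorem Finset.card_filter_pos_sub_card_filter_neg {ι α : Type*} [Zero α] [LinearOrder α]
    (s : Finset ι) (f : ι → α) :
    ((s.filter (0 < f ·)).card : ℤ) - (s.filter (f · < 0)).card =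
      ∑ i ∈ s, (SignType.sign (f i) : ℤ) := by
  simp only [Finset.card_filter, Nat.cast_sum, Nat.cast_ite, Nat.cast_one, Nat.cast_zero,
    ← Finset.sum_sub_distrib]
  refine Finset.sum_congr rfl fun i _ => ?_
  rw [sign_apply]
  split_ifs with hpos hneg <;> first | rfl | exact absurd hpos (lt_asymm hneg)

theorem sign_add_sign_add_sign_eq_neg_sign_mul {K : Type*} [Field K] [LinearOrder K]
    [IsStrictOrderedRing K] {x y z : K} (h : x + y + z = 0) :
    (SignType.sign x + SignType.sign y + SignType.sign z : ℤ) = -SignType.sign (x * y * z) := by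
  simp only [sign_mul, SignType.coe_mul]
  rcases lt_trichotomy x 0 with hx | hx | hx <;> rcases lt_trichotomy y 0 with hy | hy | hy <;>
    rcases lt_trichotomy z 0 with hz | hz | hz <;>
    first | linarith | simp [sign_neg, sign_pos, hx, hy, hz]

theorem matSignature_eq_sum_sign_eigenvalues {A : Matrix (Fin 3) (Fin 3) ℝ} (hA : A.IsHermitian) :
    matSignature A = ∑ i, (SignType.sign (hA.eigenvalues i) : ℤ) := by
  rw [matSignature, dif_pos hA, Finset.card_filter_pos_sub_card_filter_neg]

theorem matSignature_eq_neg_sign_det {A : Matrix (Fin 3) (Fin 3) ℝ} (hA : A.IsHermitian)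
    (htr : A.trace = 0) : matSignature A = -SignType.sign A.det := by
  have hsum : ∑ i, hA.eigenvalues i = 0 := by simpa [hA.trace_eq_sum_eigenvalues] using htr
  rw [matSignature_eq_sum_sign_eigenvalues hA, hA.det_eq_prod_eigenvalues, Fin.sum_univ_three]
  rw [Fin.sum_univ_three] at hsum
  simpa [Fin.prod_univ_three] using sign_add_sign_add_sign_eq_neg_sign_mul hsum

theorem maslovMatrix_isHermitian (v₁ v₂ v₃ : ℝ × ℝ) : (maslovMatrix v₁ v₂ v₃).IsHermitian := by
  ext i j
  fin_cases i <;> fin_cases j <;> simp [maslovMatrix]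

theorem trace_maslovMatrix (v₁ v₂ v₃ : ℝ × ℝ) : (maslovMatrix v₁ v₂ v₃).trace = 0 := by
  simp [maslovMatrix, Matrix.trace_fin_three]

theorem det_maslovMatrix (v₁ v₂ v₃ : ℝ × ℝ) :
    (maslovMatrix v₁ v₂ v₃).det = -2 * (omegaForm v₁ v₂ * omegaForm v₂ v₃ * omegaForm v₃ v₁) := by
  rw [Matrix.det_fin_three]
  simp only [maslovMatrix, omegaForm, Matrix.of_apply, Matrix.cons_val', Matrix.cons_val_zero,
    Matrix.cons_val_one, Matrix.cons_val, Matrix.cons_val_fin_one]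
  ring

theorem signature_maslov_eq_sign_tau (v₁ v₂ v₃ : ℝ × ℝ) (τ : ℝ)
    (hτ : τ = omegaForm v₁ v₂ * omegaForm v₂ v₃ * omegaForm v₃ v₁) :
    (0 < τ → matSignature (maslovMatrix v₁ v₂ v₃) = 1) ∧
    (τ < 0 → matSignature (maslovMatrix v₁ v₂ v₃) = -1) ∧
    (τ = 0 → matSignature (maslovMatrix v₁ v₂ v₃) = 0) := by
  have hsig : matSignature (maslovMatrix v₁ v₂ v₃) = SignType.sign τ := by
    rw [matSignature_eq_neg_sign_det (maslovMatrix_isHermitian v₁ v₂ v₃) (trace_maslovMatrix ..),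
      det_maslovMatrix, ← hτ, sign_mul]
    simp
  refine ⟨fun h => ?_, fun h => ?_, fun h => ?_⟩ <;> simp [hsig, h]
end

section
/- Let n ≥ 0 and let γ₀, γ₁, …, γₙ ∈ ℤ² with γ₀ = (1,0) and det(γᵢ, γᵢ₊₁) = ±1 for each 0 ≤ i < n. Then there exists a unique sequence of signs ε₀, ε₁, …, εₙ ∈ {1, −1} with ε₀ = 1 such that det(εᵢ·γᵢ, εᵢ₊₁·γᵢ₊₁) = 1 for all 0 ≤ i < n. (Equivalently: every path in the Farey graph starting at the class of (1,0) lifts to a unique directed path in the extended Farey graph starting at (1,0).) -/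
/-- The determinant pairing on `ℤ²`. -/
def dett (u v : ℤ × ℤ) : ℤ := u.1 * v.2 - u.2 * v.1

lemma dett_smul (a b : ℤ) (u v : ℤ × ℤ) :
    dett (a • u) (b • v) = a * b * dett u v := by
  simp [dett, Prod.smul_fst, Prod.smul_snd, smul_eq_mul]
  ring

/-- The canonical sign sequence. -/
def fseq (γ : ℕ → ℤ × ℤ) : ℕ → ℤ
  | 0 => 1
  | (i + 1) => fseq γ i * dett (γ i) (γ (i + 1))

/-- Every path in the Farey graph starting at (the class of) `(1,0)` lifts to a
unique directed path in the extended Farey graph starting at `(1,0)`: there is a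
unique choice of signs `ε i ∈ {1, -1}` with `ε 0 = 1` making each consecutive
determinant equal to `+1`. -/
theorem unique_lift_of_farey_path (n : ℕ) (γ : ℕ → ℤ × ℤ) (h0 : γ 0 = (1, 0))
    (hdet : ∀ i < n, dett (γ i) (γ (i + 1)) = 1 ∨ dett (γ i) (γ (i + 1)) = -1) :
    ∃! ε : Fin (n + 1) → ℤ,
      (∀ i, ε i = 1 ∨ ε i = -1) ∧ ε 0 = 1 ∧
      ∀ i : ℕ, ∀ h : i < n,
        dett (ε ⟨i, Nat.lt_succ_of_lt h⟩ • γ i)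
          (ε ⟨i + 1, Nat.succ_lt_succ h⟩ • γ (i + 1)) = 1 := by
  have hpm : ∀ k, k ≤ n → fseq γ k = 1 ∨ fseq γ k = -1 := by
    intro k
    induction k with
    | zero => intro _; left; rfl
    | succ k ih =>
      intro hk
      have h1 := ih (Nat.le_of_succ_le hk)
      have h2 := hdet k (Nat.lt_of_succ_le hk)
      simp only [fseq]
      rcases h1 with h1 | h1 <;> rcases h2 with h2 | h2 <;> rw [h1, h2] <;> simp
  refine ⟨fun i => fseq γ i.val, ⟨fun i => hpm i.val (Nat.lt_succ_iff.mp i.isLt), rfl, ?_⟩, ?_⟩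
  · intro i h
    have h1 := hpm i (Nat.le_of_lt h)
    have h2 := hdet i h
    simp only [dett_smul, fseq]
    rcases h1 with h1 | h1 <;> rcases h2 with h2 | h2 <;> rw [h1, h2] <;> ring
  · rintro ε ⟨hε1, hε0, hεd⟩
    funext i
    obtain ⟨i, hi⟩ := i
    simp only
    induction i with
    | zero => exact hε0
    | succ i ih =>
      have hi' : i < n := Nat.lt_of_succ_lt_succ hi
      have hIH := ih (Nat.lt_succ_of_lt hi')
      have hd := hεd i hi'
      rw [dett_smul] at hd
      have h1 := hε1 ⟨i + 1, hi⟩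
      have h2 := hdet i hi'
      have h3 := hpm i (Nat.le_of_lt hi')
      rw [hIH] at hd
      simp only [fseq]
      rcases h1 with h1 | h1 <;> rcases h2 with h2 | h2 <;> rcases h3 with h3 | h3 <;>
        rw [h1, h2, h3] <;> rw [h2, h3] at hd <;> omega
end

section
/- Let n ≥ 2 and let α₁, …, αₙ ∈ ℤ² with α₁ = (1,0), det(αᵢ, αᵢ₊₁) = 1 for i = 1, …, n−1, and det(αₙ, α₁) = ±1. Writing αᵢ = (aᵢ, bᵢ), let k₀ be the number of indices i ∈ {1,…,n} with bᵢ = 0 and let k₊ be the number of indices i ∈ {1,…,n−1} with bᵢ·bᵢ₊₁ < 0. Then det(αₙ, α₁) = 1 if and only if k₀ + k₊ is even. (Equivalently: the unique lift of a loop in the Farey graph based at 1/0 to the extended Farey graph closes up if and only if k₀ + k₊ is even.) -/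
private def sgn (v : ℤ × ℤ) : ℤ := if 0 < v.2 ∨ (v.2 = 0 ∧ v.1 < 0) then 1 else -1

private lemma step (u v : ℤ × ℤ) (h : dett u v = 1) :
    sgn v = sgn u * (if u.2 = 0 ∨ u.2 * v.2 < 0 then -1 else 1) := by
  unfold dett at h
  unfold sgn
  rcases lt_trichotomy u.2 0 with hu | hu | hu
  · rcases lt_trichotomy v.2 0 with hv | hv | hv
    · have hp : 0 < u.2 * v.2 := mul_pos_of_neg_of_neg hu hv
      split_ifs <;> omega
    · rw [hv, mul_zero, zero_sub] at h
      have h' : u.2 * v.1 = -1 := by omega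
      have hp : u.2 * v.2 = 0 := by rw [hv, mul_zero]
      rcases Int.eq_one_or_neg_one_of_mul_eq_neg_one' h' with ⟨h1, h2⟩ | ⟨h1, h2⟩ <;>
        split_ifs <;> omega
    · have hp : u.2 * v.2 < 0 := mul_neg_of_neg_of_pos hu hv
      split_ifs <;> omega
  · rw [hu, zero_mul, sub_zero] at h
    have hp : u.2 * v.2 = 0 := by rw [hu, zero_mul]
    rcases Int.eq_one_or_neg_one_of_mul_eq_one' h with ⟨h1, h2⟩ | ⟨h1, h2⟩ <;>
      split_ifs <;> omega
  · rcases lt_trichotomy v.2 0 with hv | hv | hv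
    · have hp : u.2 * v.2 < 0 := mul_neg_of_pos_of_neg hu hv
      split_ifs <;> omega
    · rw [hv, mul_zero, zero_sub] at h
      have h' : u.2 * v.1 = -1 := by omega
      have hp : u.2 * v.2 = 0 := by rw [hv, mul_zero]
      rcases Int.eq_one_or_neg_one_of_mul_eq_neg_one' h' with ⟨h1, h2⟩ | ⟨h1, h2⟩ <;>
        split_ifs <;> omega
    · have hp : 0 < u.2 * v.2 := mul_pos hu hv
      split_ifs <;> omega

private lemma key (n : ℕ) (α : ℕ → ℤ × ℤ) (h1 : α 0 = (1, 0))
    (hdet : ∀ i < n, dett (α i) (α (i + 1)) = 1) :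
    ∀ m ≤ n, sgn (α m) =
      (-1) ^ (((Finset.range m).filter
        (fun i => (α i).2 = 0 ∨ (α i).2 * (α (i + 1)).2 < 0)).card + 1) := by
  intro m
  induction m with
  | zero => intro _; simp [sgn, h1]
  | succ m ih =>
    intro hm
    have hrec := ih (le_of_lt (Nat.lt_of_succ_le hm))
    rw [step (α m) (α (m + 1)) (hdet m (Nat.lt_of_succ_le hm)), hrec,
        Finset.range_add_one, Finset.filter_insert]
    by_cases hP : (α m).2 = 0 ∨ (α m).2 * (α (m + 1)).2 < 0
    · rw [if_pos hP, if_pos hP, Finset.card_insert_of_notMem (by simp)]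
      ring
    · rw [if_neg hP, if_neg hP]; ring

/-- For a sequence `α 0 = (1,0), α 1, …, α (n-1)` in `ℤ²` with consecutive
determinants equal to `1` and `dett (α (n-1)) (α 0) = ±1`, the closing
determinant equals `1` (i.e. the lifted path in the extended Farey graph closes
up) if and only if `k₀ + k₊` is even, where `k₀` counts indices with vanishing
second coordinate and `k₊` counts consecutive pairs of second coordinates with
opposite signs. -/
theorem lift_closes_iff_even (n : ℕ) (hn : 2 ≤ n) (α : ℕ → ℤ × ℤ)
    (h1 : α 0 = (1, 0))
    (hdet : ∀ i < n - 1, dett (α i) (α (i + 1)) = 1)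
    (hlast : dett (α (n - 1)) (α 0) = 1 ∨ dett (α (n - 1)) (α 0) = -1) :
    (dett (α (n - 1)) (α 0) = 1 ↔
      Even (((Finset.range n).filter (fun i => (α i).2 = 0)).card
        + ((Finset.range (n - 1)).filter
            (fun i => (α i).2 * (α (i + 1)).2 < 0)).card)) := by
  have hdval : dett (α (n - 1)) (α 0) = -(α (n - 1)).2 := by
    rw [h1]; unfold dett; ring
  have hb : (α (n - 1)).2 = 1 ∨ (α (n - 1)).2 = -1 := by
    rcases hlast with h | h <;> rw [hdval] at h <;> omega
  have hbne : (α (n - 1)).2 ≠ 0 := by rcases hb with h | h <;> omega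
  have hkey := key (n - 1) α h1 hdet (n - 1) le_rfl
  have hdisj : Disjoint
      ((Finset.range (n - 1)).filter (fun i => (α i).2 = 0))
      ((Finset.range (n - 1)).filter (fun i => (α i).2 * (α (i + 1)).2 < 0)) := by
    rw [Finset.disjoint_left]
    intro i hi hi'
    simp only [Finset.mem_filter] at hi hi'
    rw [hi.2] at hi'
    simp at hi'
  have hsplit : ((Finset.range (n - 1)).filter
        (fun i => (α i).2 = 0 ∨ (α i).2 * (α (i + 1)).2 < 0)).card
      = ((Finset.range (n - 1)).filter (fun i => (α i).2 = 0)).card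
        + ((Finset.range (n - 1)).filter
            (fun i => (α i).2 * (α (i + 1)).2 < 0)).card := by
    rw [Finset.filter_or, Finset.card_union_of_disjoint hdisj]
  have hk0 : ((Finset.range n).filter (fun i => (α i).2 = 0)).card
      = ((Finset.range (n - 1)).filter (fun i => (α i).2 = 0)).card := by
    have h2 : Finset.range n = insert (n - 1) (Finset.range (n - 1)) := by
      rw [← Finset.range_add_one]; congr 1; omega
    rw [h2, Finset.filter_insert, if_neg hbne]
  rw [hk0]
  rw [hsplit] at hkey
  set C := ((Finset.range (n - 1)).filter (fun i => (α i).2 = 0)).card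
        + ((Finset.range (n - 1)).filter
            (fun i => (α i).2 * (α (i + 1)).2 < 0)).card with hC
  have hsgn : sgn (α (n - 1)) = (α (n - 1)).2 := by
    unfold sgn; split_ifs with h' <;> omega
  rw [hdval]
  constructor
  · intro h
    by_contra hodd
    rw [Nat.not_even_iff_odd] at hodd
    have hpow : ((-1 : ℤ)) ^ (C + 1) = 1 := hodd.add_one.neg_one_pow
    rw [hpow] at hkey
    omega
  · intro he
    have hpow : ((-1 : ℤ)) ^ (C + 1) = -1 := by
      rw [pow_succ, he.neg_one_pow, one_mul]
    rw [hpow] at hkey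
    omega
end

section
/- Let n ≥ 3 and let α₁, …, αₙ ∈ ℤ² be primitive vectors with det(αᵢ, αᵢ₊₁) = ±1 for all i, indices taken cyclically mod n. Then there exist a matrix A ∈ SL(2,ℤ), an index j (mod n), and signs ε₁, ε₂ ∈ {1, −1} such that A·α_j = ε₁·(0,1), A·α_{j+1} = ε₂·(1,0), and A·α_{j+2} is one of (1,1), (−1,−1), (−1,1), (1,−1), (0,1), (0,−1). (Every loop in the Farey graph with n ≥ 3 edges is conjugate, up to cyclic re-indexing, to a loop whose first three vertices are (0/1, 1/0, 1/1), (0/1, 1/0, −1/1), or (0/1, 1/0, 0/1).) -/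
/-- The action of a `2 × 2` integer matrix on `ℤ²`. -/
def matAct (A : Matrix (Fin 2) (Fin 2) ℤ) (v : ℤ × ℤ) : ℤ × ℤ :=
  (A 0 0 * v.1 + A 0 1 * v.2, A 1 0 * v.1 + A 1 1 * v.2)

namespace Farey

lemma dett_self (u : ℤ × ℤ) : dett u u = 0 := by
  simp only [dett]; ring

lemma dett_anticomm (u v : ℤ × ℤ) : dett u v = -dett v u := by
  simp only [dett]; ring

lemma dett_pluecker (t u v w : ℤ × ℤ) :
    dett u v * dett t w = dett w v * dett t u + dett u w * dett t v := by
  simp only [dett]; ring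

/-- For `dett u v = ±1`, sends `u ↦ ±(0, 1)` and `v ↦ (-1, 0)`. -/
def normalizingMatrix (u v : ℤ × ℤ) : Matrix (Fin 2) (Fin 2) ℤ :=
  !![dett u v * u.2, -(dett u v * u.1); v.2, -v.1]

lemma matAct_normalizingMatrix (u v w : ℤ × ℤ) :
    matAct (normalizingMatrix u v) w = (dett u v * dett w u, dett w v) := by
  simp only [matAct, normalizingMatrix, dett, Matrix.of_apply, Matrix.cons_val',
    Matrix.cons_val_zero, Matrix.cons_val_one, Matrix.cons_val_fin_one, Prod.mk.injEq]
  constructor <;> ring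

lemma det_normalizingMatrix (u v : ℤ × ℤ) :
    (normalizingMatrix u v).det = dett u v * dett u v := by
  rw [normalizingMatrix, Matrix.det_fin_two_of, dett]; ring

lemma mem_normalForm_of_abs {x y : ℤ} (hx : |x| ≤ 1) (hy : |y| = 1) :
    (x, y) ∈ ({(1, 1), (-1, -1), (-1, 1), (1, -1), (0, 1), (0, -1)} : Set (ℤ × ℤ)) := by
  obtain ⟨hx₁, hx₂⟩ := abs_le.1 hx
  rcases (abs_eq zero_le_one).1 hy with rfl | rfl <;> interval_cases x <;> simp

lemma exists_det_eq_one_normalForm {u v w : ℤ × ℤ} (huv : |dett u v| = 1)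
    (hvw : |dett v w| = 1) (huw : |dett u w| ≤ 1) :
    ∃ A : Matrix (Fin 2) (Fin 2) ℤ, A.det = 1 ∧ ∃ ε₁ ε₂ : ℤ,
      (ε₁ = 1 ∨ ε₁ = -1) ∧ (ε₂ = 1 ∨ ε₂ = -1) ∧
      matAct A u = ε₁ • ((0 : ℤ), (1 : ℤ)) ∧
      matAct A v = ε₂ • ((1 : ℤ), (0 : ℤ)) ∧
      matAct A w ∈
        ({(1, 1), (-1, -1), (-1, 1), (1, -1), (0, 1), (0, -1)} : Set (ℤ × ℤ)) := by
  have hsq : dett u v * dett u v = 1 := by rw [← abs_mul_abs_self, huv, mul_one]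
  refine ⟨normalizingMatrix u v, by rw [det_normalizingMatrix, hsq], dett u v, -1,
    (abs_eq zero_le_one).1 huv, Or.inr rfl, ?_, ?_, ?_⟩
  · rw [matAct_normalizingMatrix, dett_self]
    simp
  · rw [matAct_normalizingMatrix, dett_self, dett_anticomm v u, mul_neg, hsq]
    simp
  · rw [matAct_normalizingMatrix]
    apply mem_normalForm_of_abs
    · rw [abs_mul, huv, one_mul, dett_anticomm, abs_neg]
      exact huw
    · rw [dett_anticomm, abs_neg, hvw]

lemma abs_lt_of_mul_eq_add {a b d x y z : ℤ} (hd : |d| = 1) (ha : |a| = 1)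
    (hb : 2 ≤ |b|) (h : d * z = a * x + b * y) (hxy : |x| < |y|) : |y| < |z| := by
  have hz : |z| = |a * x + b * y| := by rw [← h, abs_mul, hd, one_mul]
  have hby : |b * y| ≤ |a * x + b * y| + |a * x| := by
    simpa using abs_sub (a * x + b * y) (a * x)
  rw [abs_mul, abs_mul, ha, one_mul] at hby
  nlinarith [abs_nonneg y]

lemma abs_dett_lt_abs_dett_succ (β : ℕ → ℤ × ℤ) (k : ℕ)
    (hstep : ∀ i < k, |dett (β i) (β (i + 1))| = 1)
    (hskip : ∀ i, i + 1 < k → 2 ≤ |dett (β i) (β (i + 2))|) :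
    ∀ j < k, |dett (β 0) (β j)| < |dett (β 0) (β (j + 1))| := by
  intro j hj
  induction j with
  | zero => simp [dett_self, hstep 0 hj]
  | succ j ih =>
    have hnext : |dett (β (j + 2)) (β (j + 1))| = 1 := by
      rw [dett_anticomm, abs_neg]; exact hstep (j + 1) hj
    exact abs_lt_of_mul_eq_add (hstep j (by omega)) hnext (hskip j hj)
      (dett_pluecker _ _ _ _) (ih (by omega))

lemma dett_ne_zero_of_no_shortcut (β : ℕ → ℤ × ℤ) {k : ℕ} (hk : 0 < k)
    (hstep : ∀ i < k, |dett (β i) (β (i + 1))| = 1)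
    (hskip : ∀ i, i + 1 < k → 2 ≤ |dett (β i) (β (i + 2))|) :
    dett (β 0) (β k) ≠ 0 := by
  have hpos : ∀ j < k, 0 < |dett (β 0) (β (j + 1))| := by
    intro j hj
    induction j with
    | zero => simpa [dett_self] using abs_dett_lt_abs_dett_succ β k hstep hskip 0 hj
    | succ j ih =>
      exact (ih (by omega)).trans (abs_dett_lt_abs_dett_succ β k hstep hskip _ hj)
  obtain ⟨j, rfl⟩ := Nat.exists_eq_succ_of_ne_zero hk.ne'
  exact abs_pos.1 (hpos j (by omega))

end Farey

open Farey in
theorem farey_loop_normal_form_general (n : ℕ) (hn : 3 ≤ n) (α : ℕ → ℤ × ℤ)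
    (hdet : ∀ i < n, dett (α i) (α ((i + 1) % n)) = 1 ∨
      dett (α i) (α ((i + 1) % n)) = -1) :
    ∃ A : Matrix (Fin 2) (Fin 2) ℤ, A.det = 1 ∧ ∃ j < n, ∃ ε₁ ε₂ : ℤ,
      (ε₁ = 1 ∨ ε₁ = -1) ∧ (ε₂ = 1 ∨ ε₂ = -1) ∧
      matAct A (α j) = ε₁ • ((0 : ℤ), (1 : ℤ)) ∧
      matAct A (α ((j + 1) % n)) = ε₂ • ((1 : ℤ), (0 : ℤ)) ∧
      matAct A (α ((j + 2) % n)) ∈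
        ({(1, 1), (-1, -1), (-1, 1), (1, -1), (0, 1), (0, -1)} : Set (ℤ × ℤ)) := by
  have hn0 : 0 < n := by omega
  have hstep : ∀ i < n, |dett (α i) (α ((i + 1) % n))| = 1 :=
    fun i hi => (abs_eq zero_le_one).2 (hdet i hi)
  by_cases hshort : ∃ j < n, |dett (α j) (α ((j + 2) % n))| ≤ 1
  · obtain ⟨j, hj, hjw⟩ := hshort
    have hnext := hstep ((j + 1) % n) (Nat.mod_lt _ hn0)
    rw [Nat.mod_add_mod] at hnext
    obtain ⟨A, hA, hnormal⟩ := exists_det_eq_one_normalForm (hstep j hj) hnext hjw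
    exact ⟨A, hA, j, hj, hnormal⟩
  · push Not at hshort
    refine absurd ?_ (dett_ne_zero_of_no_shortcut (fun i => α (i % n)) hn0 ?_ ?_)
    · simp [dett_self]
    · intro i hi
      simpa [Nat.mod_eq_of_lt hi] using hstep i hi
    · intro i hi
      simpa [Nat.mod_eq_of_lt (show i < n by omega)] using Int.add_one_le_of_lt (hshort i (by omega))

/-- Every loop in the Farey graph with `n ≥ 3` edges is conjugate (via some
`A ∈ SL(2,ℤ)`, after cyclic re-indexing and up to signs of representatives) to a
loop whose first three vertices are `0/1, 1/0`, and one of `1/1`, `-1/1`, `0/1`. -/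
theorem farey_loop_normal_form (n : ℕ) (hn : 3 ≤ n) (α : ℕ → ℤ × ℤ)
    (hprim : ∀ i < n, IsCoprime (α i).1 (α i).2)
    (hdet : ∀ i < n, dett (α i) (α ((i + 1) % n)) = 1 ∨
      dett (α i) (α ((i + 1) % n)) = -1) :
    ∃ A : Matrix (Fin 2) (Fin 2) ℤ, A.det = 1 ∧ ∃ j < n, ∃ ε₁ ε₂ : ℤ,
      (ε₁ = 1 ∨ ε₁ = -1) ∧ (ε₂ = 1 ∨ ε₂ = -1) ∧
      matAct A (α j) = ε₁ • ((0 : ℤ), (1 : ℤ)) ∧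
      matAct A (α ((j + 1) % n)) = ε₂ • ((1 : ℤ), (0 : ℤ)) ∧
      matAct A (α ((j + 2) % n)) ∈
        ({(1, 1), (-1, -1), (-1, 1), (1, -1), (0, 1), (0, -1)} : Set (ℤ × ℤ)) :=
  farey_loop_normal_form_general n hn α hdet
end

section
/- Let n ≥ 3 and let α₁, …, αₙ ∈ ℤ² be primitive vectors whose classes up to sign are pairwise distinct, satisfying det(αᵢ, αᵢ₊₁) = ±1 for all i, indices taken cyclically mod n. Then there exists an index i (mod n) with det(αᵢ, αᵢ₊₂) = ±1. (Every embedded circuit in the Farey graph contains two consecutive edges that cobound a triangle with an edge of the Farey graph.) -/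
/-- Every embedded circuit in the Farey graph with `n ≥ 3` vertices contains two
consecutive edges that cobound a triangle with an edge of the Farey graph: some
`α i` and `α (i+2)` (cyclically) also span a parallelogram of area `1`. -/
theorem farey_circuit_has_ear (n : ℕ) (hn : 3 ≤ n) (α : ℕ → ℤ × ℤ)
    (hprim : ∀ i < n, IsCoprime (α i).1 (α i).2)
    (hdist : ∀ i < n, ∀ j < n, i ≠ j → α i ≠ α j ∧ α i ≠ -α j)
    (hdet : ∀ i < n, dett (α i) (α ((i + 1) % n)) = 1 ∨
      dett (α i) (α ((i + 1) % n)) = -1) :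
    ∃ i < n, dett (α i) (α ((i + 2) % n)) = 1 ∨
      dett (α i) (α ((i + 2) % n)) = -1 := by
  by_contra hear
  push_neg at hear
  have hn0 : 0 < n := by omega
  have hY0 : dett (α 0) (α 0) = 0 := by simp only [dett]; ring
  have step : ∀ i, 1 ≤ i → i < n →
      |dett (α 0) (α (i-1))| < |dett (α 0) (α i)| →
      |dett (α 0) (α i)| < |dett (α 0) (α ((i+1) % n))| := by
    intro i h1 h2 ih
    have hd : dett (α (i-1)) (α i) = 1 ∨ dett (α (i-1)) (α i) = -1 := by
      have := hdet (i-1) (by omega)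
      rwa [show i - 1 + 1 = i by omega, Nat.mod_eq_of_lt h2] at this
    have he : dett (α i) (α ((i+1) % n)) = 1 ∨
        dett (α i) (α ((i+1) % n)) = -1 := hdet i h2
    have hAne : dett (α (i-1)) (α ((i+1) % n)) ≠ 1 ∧
        dett (α (i-1)) (α ((i+1) % n)) ≠ -1 := by
      have := hear (i-1) (by omega)
      rwa [show i - 1 + 2 = i + 1 by omega] at this
    have hc1 : dett (α (i-1)) (α i) * (α ((i+1) % n)).1 =
        dett (α (i-1)) (α ((i+1) % n)) * (α i).1 -
        dett (α i) (α ((i+1) % n)) * (α (i-1)).1 := by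
      simp only [dett]; ring
    have hc2 : dett (α (i-1)) (α i) * (α ((i+1) % n)).2 =
        dett (α (i-1)) (α ((i+1) % n)) * (α i).2 -
        dett (α i) (α ((i+1) % n)) * (α (i-1)).2 := by
      simp only [dett]; ring
    have hA0 : dett (α (i-1)) (α ((i+1) % n)) ≠ 0 := by
      intro h0
      have hne : (i+1) % n ≠ i - 1 := by
        rcases Nat.lt_or_ge (i+1) n with h | h
        · rw [Nat.mod_eq_of_lt h]; omega
        · rw [show i + 1 = n by omega, Nat.mod_self]; omega
      obtain ⟨hw1, hw2⟩ := hdist ((i+1) % n) (Nat.mod_lt _ hn0) (i-1) (by omega) hne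
      rw [h0] at hc1 hc2
      rcases hd with hd | hd <;> rcases he with he | he <;>
          rw [hd, he] at hc1 hc2 <;>
          simp only [one_mul, neg_one_mul, neg_mul, zero_mul, zero_sub, neg_neg,
            mul_one] at hc1 hc2
      · exact hw2 (by rw [Prod.ext_iff]; constructor <;> simp [hc1, hc2])
      · exact hw1 (by rw [Prod.ext_iff]; constructor <;> simp [hc1, hc2])
      · exact hw1 (by rw [Prod.ext_iff]; constructor <;> omega)
      · exact hw2 (by rw [Prod.ext_iff]; constructor <;> simp <;> omega)
    have hA2 : 2 ≤ |dett (α (i-1)) (α ((i+1) % n))| := by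
      rw [le_abs]
      rcases hAne with ⟨h1', h2'⟩
      omega
    have hrec : dett (α (i-1)) (α i) * dett (α 0) (α ((i+1) % n)) =
        dett (α (i-1)) (α ((i+1) % n)) * dett (α 0) (α i) -
        dett (α i) (α ((i+1) % n)) * dett (α 0) (α (i-1)) := by
      simp only [dett]; ring
    have habs1 : |dett (α 0) (α ((i+1) % n))| =
        |dett (α (i-1)) (α i) * dett (α 0) (α ((i+1) % n))| := by
      rcases hd with hd | hd <;> rw [hd] <;> simp
    have h3 := abs_sub_abs_le_abs_sub
      (dett (α (i-1)) (α ((i+1) % n)) * dett (α 0) (α i))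
      (dett (α i) (α ((i+1) % n)) * dett (α 0) (α (i-1)))
    have h4 : |dett (α (i-1)) (α ((i+1) % n)) * dett (α 0) (α i)| =
        |dett (α (i-1)) (α ((i+1) % n))| * |dett (α 0) (α i)| := abs_mul _ _
    have h5 : |dett (α i) (α ((i+1) % n)) * dett (α 0) (α (i-1))| =
        |dett (α 0) (α (i-1))| := by
      rcases he with he | he <;> rw [he] <;> simp
    have h6 : 2 * |dett (α 0) (α i)| ≤
        |dett (α (i-1)) (α ((i+1) % n))| * |dett (α 0) (α i)| :=
      mul_le_mul_of_nonneg_right hA2 (abs_nonneg _)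
    rw [habs1, hrec]
    linarith
  have base : |dett (α 0) (α 0)| < |dett (α 0) (α (1 % n))| := by
    have := hdet 0 (by omega)
    rw [show (0+1) % n = 1 % n by norm_num] at this
    rw [hY0]
    rcases this with h | h <;> rw [h] <;> simp
  have mono : ∀ i, i < n → |dett (α 0) (α (i % n))| < |dett (α 0) (α ((i+1) % n))| := by
    intro i
    induction i with
    | zero => intro _; simpa using base
    | succ k ih =>
      intro hk
      have hkk : k < n := by omega
      have h1 := ih hkk
      rw [Nat.mod_eq_of_lt hkk, Nat.mod_eq_of_lt hk] at h1
      have := step (k+1) (by omega) hk (by simpa using h1)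
      rw [Nat.mod_eq_of_lt hk]
      simpa using this
  have hfin := mono (n-1) (by omega)
  rw [show n - 1 + 1 = n by omega, Nat.mod_self, hY0] at hfin
  simp at hfin
  exact absurd hfin (abs_nonneg _).not_gt
end

section
/- Let p, q ≥ 1 be integers. Then the set {(x, y) ∈ ℂ × ℂ : x^{q−1}·y = −1 and x + y^{p−1} = 0} is finite and has exactly (p−1)(q−1) + 1 elements. (These are the intersection points of the two components 𝒱₁ and 𝒱₂ of the singular curve 𝒱 in ℂP¹ × ℂP¹, all of which lie on the central torus; their number equals the bridge number pq − p − q + 2 of the curve 𝒞_{p,q}.) -/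
/-- The intersection points of the two components `𝒱₁`, `𝒱₂` of the singular
curve `𝒱` in the affine chart: there are exactly `(p-1)(q-1) + 1` of them. -/
theorem card_intersection_V1_V2 (p q : ℕ) (hp : 1 ≤ p) (hq : 1 ≤ q) :
    {z : ℂ × ℂ | z.1 ^ (q - 1) * z.2 = -1 ∧ z.1 + z.2 ^ (p - 1) = 0}.Finite ∧
    {z : ℂ × ℂ | z.1 ^ (q - 1) * z.2 = -1 ∧ z.1 + z.2 ^ (p - 1) = 0}.ncard
      = (p - 1) * (q - 1) + 1 := by
  set n : ℕ := (p - 1) * (q - 1) + 1 with hn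
  set c : ℂ := (-1) ^ q with hc
  have hn0 : 0 < n := Nat.succ_pos _
  have hc0 : c ≠ 0 := by
    simp [hc]
  have key : ∀ y : ℂ, (-(y ^ (p-1))) ^ (q-1) * y = (-1) ^ (q-1) * y ^ n := by
    intro y
    rw [neg_pow, ← pow_mul]
    ring
  have hsign : ((-1 : ℂ)) ^ (q - 1) * (-1) ^ q = -1 := by
    rw [← pow_add]
    have : q - 1 + q = 2 * (q - 1) + 1 := by omega
    rw [this, pow_succ, pow_mul]
    simp
  have hset : {z : ℂ × ℂ | z.1 ^ (q - 1) * z.2 = -1 ∧ z.1 + z.2 ^ (p - 1) = 0}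
      = (fun y : ℂ => (-(y ^ (p-1)), y)) '' {y : ℂ | y ^ n = c} := by
    ext ⟨x, y⟩
    simp only [Set.mem_setOf_eq, Set.mem_image, Prod.mk.injEq]
    constructor
    · rintro ⟨h1, h2⟩
      have hx : x = -(y ^ (p-1)) := by linear_combination h2
      refine ⟨y, ?_, hx.symm, rfl⟩
      rw [hx, key] at h1
      have : (-1 : ℂ) ^ (q - 1) * ((-1) ^ (q-1) * y ^ n) = (-1 : ℂ)^(q-1) * (-1) := by
        rw [h1]
      rw [← mul_assoc, ← pow_add] at this
      have he : (q - 1) + (q - 1) = 2 * (q - 1) := by ring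
      rw [he, pow_mul] at this
      simp only [neg_one_sq, one_pow, one_mul] at this
      rw [hc, this]
      have hq1 : (q - 1) + 1 = q := by omega
      conv_rhs => rw [← hq1, pow_succ]
    · rintro ⟨y', hy', hx, rfl⟩
      subst hx
      refine ⟨?_, by ring⟩
      rw [key, hy', hc, hsign]
  have hζ := Complex.isPrimitiveRoot_exp n hn0.ne'
  have hroots : {y : ℂ | y ^ n = c} = ↑(Polynomial.nthRoots n c).toFinset := by
    ext y
    simp [Polynomial.mem_nthRoots hn0]
  have hcard : (Polynomial.nthRoots n c).toFinset.card = n := by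
    rw [Multiset.toFinset_card_of_nodup (hζ.nthRoots_nodup hc0),
      hζ.card_nthRoots, if_pos]
    exact IsAlgClosed.exists_pow_nat_eq c hn0
  have hfin : {y : ℂ | y ^ n = c}.Finite := by
    rw [hroots]; exact (Polynomial.nthRoots n c).toFinset.finite_toSet
  have hinj : Function.Injective (fun y : ℂ => (-(y ^ (p-1)), y)) := by
    intro a b hab
    exact congrArg Prod.snd hab
  constructor
  · rw [hset]; exact hfin.image _
  · rw [hset, Set.ncard_image_of_injective _ hinj, hroots, Set.ncard_coe_finset, hcard]
end
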